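/- arXiv:2510.05639 — 2 statements merged into one kernel-verified Lean document; each statement's English description precedes it below -/
import Mathlib

section
/- Let X and Y be second-countable locally compact Hausdorff spaces and f : X → Y a Borel measurable function. Then the pushforward map f_# : P(X) → P(Y), defined by (f_#μ)(A) = μ(f⁻¹[A]), is well defined (f_#μ is a probability Radon measure) and is Borel measurable with respect to the Borel σ-algebras of the weak topologies. If moreover f is continuous, then f_# is continuous. -/
open MeasureTheory Topology

noncomputable section

/-- The set of probability Radon measures over `X`. -/
def ProbRadon (X : Type*) [TopologicalSpace X] [MeasurableSpace X] : Type _ :=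
  {μ : Measure X // IsProbabilityMeasure μ ∧ μ.Regular}

/-- The weak topology on `ProbRadon X`: the initial topology induced by the maps
`μ ↦ ∫ k dμ` corresponding to continuous functions `k : X → ℝ` with compact support. -/
instance (X : Type*) [TopologicalSpace X] [MeasurableSpace X] :
    TopologicalSpace (ProbRadon X) :=
  ⨅ k : {k : X → ℝ // Continuous k ∧ HasCompactSupport k},
    TopologicalSpace.induced (fun μ : ProbRadon X => ∫ x, k.1 x ∂μ.1) inferInstance

/-- The Borel σ-algebra of the weak topology on `ProbRadon X`. -/
instance (X : Type*) [TopologicalSpace X] [MeasurableSpace X] :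
    MeasurableSpace (ProbRadon X) := borel (ProbRadon X)

set_option linter.unusedSectionVars false

namespace PRAux
abbrev TK (Z : Type*) [TopologicalSpace Z] : Type _ :=
  {k : Z → ℝ // Continuous k ∧ HasCompactSupport k}
variable {Z : Type*} [TopologicalSpace Z] [MeasurableSpace Z]
theorem ev_cont (k : TK Z) :
    Continuous fun μ : ProbRadon Z => ∫ x, k.1 x ∂μ.1 :=
  continuous_iInf_dom (i := k) continuous_induced_dom
theorem integrable_of_bdd (μ : ProbRadon Z) {g : Z → ℝ}
    (hg : AEStronglyMeasurable g μ.1) {C : ℝ} (hC : ∀ x, |g x| ≤ C) :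
    Integrable g μ.1 := by
  haveI := μ.2.1
  exact (integrable_const C).mono' hg
    (Filter.Eventually.of_forall fun x => by simpa [Real.norm_eq_abs] using hC x)

theorem abs_ev_sub_le (μ : ProbRadon Z) {a b : Z → ℝ}
    (ha : Integrable a μ.1) (hb : Integrable b μ.1) {c : ℝ}
    (h : ∀ x, |a x - b x| ≤ c) :
    |(∫ x, a x ∂μ.1) - ∫ x, b x ∂μ.1| ≤ c := by
  haveI := μ.2.1
  rw [← integral_sub ha hb]
  have := norm_integral_le_of_norm_le_const (μ := μ.1) (f := fun x => a x - b x) (C := c)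
    (Filter.Eventually.of_forall fun x => by simpa [Real.norm_eq_abs] using h x)
  simpa [Real.norm_eq_abs, measure_univ] using this

section LCH
variable [T2Space Z] [LocallyCompactSpace Z] [BorelSpace Z]

theorem measurable_coe_open {U : Set Z} (hU : IsOpen U) :
    Measurable fun μ : ProbRadon Z => μ.1 U := by
  haveI : BorelSpace (ProbRadon Z) := ⟨rfl⟩
  have heq : (fun μ : ProbRadon Z => μ.1 U)
      = fun μ => ⨆ k : {k : TK Z // (∀ x, k.1 x ∈ Set.Icc (0:ℝ) 1) ∧ ∀ x ∉ U, k.1 x = 0},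
          ENNReal.ofReal (∫ x, k.1.1 x ∂μ.1) := by
    funext μ
    haveI := μ.2.1
    apply le_antisymm
    · refine le_of_forall_lt fun r hr => ?_
      obtain ⟨K, hKU, hKc, hrK⟩ := μ.2.2.innerRegular hU r hr
      obtain ⟨χ, hχ1, hχ0, hχc, hχi⟩ := exists_continuous_one_zero_of_isCompact hKc
        hU.isClosed_compl (Set.disjoint_left.mpr fun x hx hx' => hx' (hKU hx))
      refine hrK.trans_le (le_trans ?_
        (le_iSup (fun k : {k : TK Z // (∀ x, k.1 x ∈ Set.Icc (0:ℝ) 1) ∧ ∀ x ∉ U, k.1 x = 0} =>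
            ENNReal.ofReal (∫ x, k.1.1 x ∂μ.1))
          ⟨⟨⇑χ, χ.continuous, hχc⟩, hχi, fun x hx => hχ0 hx⟩))
      rw [ofReal_integral_eq_lintegral_ofReal (χ.continuous.integrable_of_hasCompactSupport hχc)
        (Filter.Eventually.of_forall fun x => (hχi x).1)]
      rw [← lintegral_indicator_one hKc.measurableSet]
      refine lintegral_mono fun x => ?_
      by_cases hx : x ∈ K
      · simp [Set.indicator_of_mem hx, hχ1 hx]
      · simp [Set.indicator_of_notMem hx]
    · refine iSup_le fun k => ?_
      rw [ofReal_integral_eq_lintegral_ofReal (k.1.2.1.integrable_of_hasCompactSupport k.1.2.2)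
        (Filter.Eventually.of_forall fun x => (k.2.1 x).1)]
      rw [← lintegral_indicator_one hU.measurableSet]
      refine lintegral_mono fun x => ?_
      by_cases hx : x ∈ U
      · simpa [Set.indicator_of_mem hx] using ENNReal.ofReal_le_one.mpr (k.2.1 x).2
      · simp [k.2.2 x hx, Set.indicator_of_notMem hx]
  rw [heq]
  apply LowerSemicontinuous.measurable
  apply lowerSemicontinuous_iSup
  intro k
  exact (ENNReal.continuous_ofReal.comp (ev_cont k.1)).lowerSemicontinuous

theorem measurable_toMeasure : Measurable fun μ : ProbRadon Z => μ.1 := by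
  apply Measure.measurable_of_measurable_coe
  intro s hs
  refine MeasurableSpace.induction_on_inter
    (C := fun s _ => Measurable fun μ : ProbRadon Z => μ.1 s)
    BorelSpace.measurable_eq isPiSystem_isOpen ?_ ?_ ?_ ?_ s hs
  · simp only [measure_empty]; exact measurable_const
  · exact fun t ht => measurable_coe_open ht
  · intro t ht hC
    have : (fun μ : ProbRadon Z => μ.1 tᶜ) = fun μ => 1 - μ.1 t := by
      funext μ
      haveI := μ.2.1
      rw [measure_compl ht (measure_ne_top _ _), measure_univ]
    rw [this]
    exact measurable_const.sub hC
  · intro g hdisj hmeas hC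
    have : (fun μ : ProbRadon Z => μ.1 (⋃ i, g i)) = fun μ => ∑' i, μ.1 (g i) := by
      funext μ; exact measure_iUnion hdisj hmeas
    rw [this]
    exact Measurable.ennreal_tsum hC

theorem measurable_integral_bdd {g : Z → ℝ} (hg : Measurable g) {C : ℝ} (hC : ∀ x, |g x| ≤ C) :
    Measurable fun μ : ProbRadon Z => ∫ x, g x ∂μ.1 := by
  have hint : ∀ μ : ProbRadon Z, Integrable g μ.1 := fun μ =>
    integrable_of_bdd μ hg.aestronglyMeasurable hC
  have heq : (fun μ : ProbRadon Z => ∫ x, g x ∂μ.1)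
      = fun μ => (∫⁻ x, ENNReal.ofReal (g x) ∂μ.1).toReal
          - (∫⁻ x, ENNReal.ofReal (-g x) ∂μ.1).toReal :=
    funext fun μ => integral_eq_lintegral_pos_part_sub_lintegral_neg_part (hint μ)
  rw [heq]
  have h1 := (Measure.measurable_lintegral hg.ennreal_ofReal).comp (measurable_toMeasure (Z := Z))
  have h2 := (Measure.measurable_lintegral hg.neg.ennreal_ofReal).comp (measurable_toMeasure (Z := Z))
  exact h1.ennreal_toReal.sub h2.ennreal_toReal

end LCH

section SC
variable [T2Space Z] [LocallyCompactSpace Z] [SecondCountableTopology Z]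

theorem exists_countable_dense_Cc :
    ∃ D : Set (TK Z), D.Countable ∧
      ∀ (k : TK Z) (ε : ℝ), 0 < ε → ∃ d ∈ D, ∀ x, |d.1 x - k.1 x| ≤ ε := by
  classical
  obtain ⟨D₀, hD₀c, hD₀d⟩ := TopologicalSpace.exists_countable_dense C(Z, ℝ)
  set E := CompactExhaustion.choice Z with hE
  have hχ : ∀ n : ℕ, ∃ χ : C(Z, ℝ), Set.EqOn ⇑χ 1 (E n) ∧
      Set.EqOn ⇑χ 0 (interior (E (n+1)))ᶜ ∧ HasCompactSupport ⇑χ ∧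
      ∀ x, χ x ∈ Set.Icc (0:ℝ) 1 := fun n =>
    exists_continuous_one_zero_of_isCompact (E.isCompact n)
      isOpen_interior.isClosed_compl
      (Set.disjoint_left.mpr fun x hx hx' => hx' (E.subset_interior_succ n hx))
  choose χ hχ1 hχ0 hχc hχi using hχ
  refine ⟨(fun p : C(Z, ℝ) × ℕ =>
      (⟨fun x => χ p.2 x * p.1 x, (map_continuous (χ p.2)).mul (map_continuous p.1),
        (hχc p.2).mul_right⟩ : TK Z)) '' (D₀ ×ˢ Set.univ),
    ((hD₀c.prod Set.countable_univ).image _), ?_⟩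
  intro k ε hε
  obtain ⟨n, hn⟩ := E.exists_superset_of_isCompact k.2.2
  have hV : {p : ℝ × ℝ | dist p.1 p.2 < ε} ∈ uniformity ℝ := Metric.dist_mem_uniformity hε
  have hW : {fg : C(Z, ℝ) × C(Z, ℝ) | ∀ x ∈ E (n+1), (fg.1 x, fg.2 x) ∈
      {p : ℝ × ℝ | dist p.1 p.2 < ε}} ∈ uniformity C(Z, ℝ) :=
    ContinuousMap.hasBasis_compactConvergenceUniformity.mem_of_mem
      (i := (E (n+1), {p : ℝ × ℝ | dist p.1 p.2 < ε})) ⟨E.isCompact _, hV⟩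
  set kC : C(Z, ℝ) := ⟨k.1, k.2.1⟩ with hkC
  obtain ⟨g, hgball, hgD₀⟩ := mem_closure_iff_nhds.1 (hD₀d kC) _
    (UniformSpace.ball_mem_nhds kC hW)
  have hgε : ∀ x ∈ E (n+1), dist (kC x) (g x) < ε := hgball
  refine ⟨⟨fun x => χ n x * g x, (map_continuous (χ n)).mul (map_continuous g),
      (hχc n).mul_right⟩, ⟨(g, n), ⟨hgD₀, trivial⟩, rfl⟩, ?_⟩
  intro x
  show |χ n x * g x - k.1 x| ≤ ε
  have hk : χ n x * k.1 x = k.1 x := by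
    by_cases hx : x ∈ tsupport k.1
    · rw [hχ1 n (hn hx)]; simp
    · rw [image_eq_zero_of_notMem_tsupport hx, mul_zero]
  by_cases hx : x ∈ E (n+1)
  · have h0 : χ n x * g x - k.1 x = χ n x * (g x - k.1 x) := by
      rw [mul_sub, hk]
    rw [h0, abs_mul]
    have h2 : |χ n x| ≤ 1 := by
      rw [abs_of_nonneg (hχi n x).1]; exact (hχi n x).2
    have h3 : |g x - k.1 x| ≤ ε := by
      have := hgε x hx
      rw [dist_comm, Real.dist_eq] at this
      exact this.le
    calc |χ n x| * |g x - k.1 x| ≤ 1 * ε :=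
          mul_le_mul h2 h3 (abs_nonneg _) zero_le_one
      _ = ε := one_mul ε
  · have hχ0x : χ n x = 0 := hχ0 n (fun hx' => hx (interior_subset hx'))
    have hkx : k.1 x = 0 := by
      apply image_eq_zero_of_notMem_tsupport
      intro hx'
      exact hx (E.subset_succ n (hn hx'))
    rw [hχ0x, hkx]
    simpa using hε.le

variable [BorelSpace Z]

def tauD (D : Set (TK Z)) : TopologicalSpace (ProbRadon Z) :=
  ⨅ d : D, TopologicalSpace.induced
    (fun μ : ProbRadon Z => ∫ x, (d : TK Z).1 x ∂μ.1) inferInstance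

theorem secondCountable : SecondCountableTopology (ProbRadon Z) := by
  obtain ⟨D, hDc, hD⟩ := exists_countable_dense_Cc (Z := Z)
  haveI : Countable D := hDc.to_subtype
  have hevd : ∀ d : D, @Continuous _ _ (tauD D) _
      (fun μ : ProbRadon Z => ∫ x, (d : TK Z).1 x ∂μ.1) :=
    fun d => continuous_iInf_dom (i := d) continuous_induced_dom
  have hck : ∀ k : TK Z, @Continuous _ _ (tauD D) _
      (fun μ : ProbRadon Z => ∫ x, k.1 x ∂μ.1) := by
    intro k
    rw [@continuous_iff_continuousAt _ _ (tauD D) _]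
    intro μ
    refine Metric.tendsto_nhds.2 fun ε hε => ?_
    obtain ⟨d, hd, hdk⟩ := hD k (ε/3) (by positivity)
    have hint : ∀ ν : ProbRadon Z, Integrable k.1 ν.1 ∧ Integrable d.1 ν.1 := fun ν => by
      haveI := ν.2.1
      exact ⟨k.2.1.integrable_of_hasCompactSupport k.2.2,
        d.2.1.integrable_of_hasCompactSupport d.2.2⟩
    have h3 : ∀ ν : ProbRadon Z, |(∫ x, k.1 x ∂ν.1) - ∫ x, d.1 x ∂ν.1| ≤ ε/3 := fun ν =>
      abs_ev_sub_le ν (hint ν).1 (hint ν).2 fun x => by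
        rw [abs_sub_comm]; exact hdk x
    have hnb : ∀ᶠ ν in @nhds _ (tauD D) μ,
        dist (∫ x, d.1 x ∂ν.1) (∫ x, d.1 x ∂μ.1) < ε/3 :=
      Metric.tendsto_nhds.1 (@Continuous.tendsto _ _ (tauD D) _ _ (hevd ⟨d, hd⟩) μ) _
        (by positivity)
    filter_upwards [hnb] with ν hν
    rw [Real.dist_eq] at hν ⊢
    have t1 := abs_sub_le (∫ x, k.1 x ∂ν.1) (∫ x, d.1 x ∂ν.1) (∫ x, k.1 x ∂μ.1)
    have t2 := abs_sub_le (∫ x, d.1 x ∂ν.1) (∫ x, d.1 x ∂μ.1) (∫ x, k.1 x ∂μ.1)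
    have t3 := h3 ν
    have t4 : |(∫ x, d.1 x ∂μ.1) - ∫ x, k.1 x ∂μ.1| ≤ ε/3 := by
      rw [abs_sub_comm]; exact h3 μ
    linarith
  have htop : (inferInstance : TopologicalSpace (ProbRadon Z))
      = TopologicalSpace.induced (fun (μ : ProbRadon Z) (d : D) => ∫ x, (d : TK Z).1 x ∂μ.1)
          Pi.topologicalSpace := by
    have h1 : TopologicalSpace.induced
        (fun (μ : ProbRadon Z) (d : D) => ∫ x, (d : TK Z).1 x ∂μ.1) Pi.topologicalSpace = (tauD D) := by
      show TopologicalSpace.induced (fun (μ : ProbRadon Z) (d : D) => ∫ x, (d : TK Z).1 x ∂μ.1)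
        (⨅ d : D, TopologicalSpace.induced (fun f : D → ℝ => f d) inferInstance) = (tauD D)
      rw [induced_iInf]
      simp only [induced_compose]
      rfl
    rw [h1]
    apply le_antisymm
    · exact le_iInf fun d => iInf_le
        (fun k : TK Z => TopologicalSpace.induced
          (fun μ : ProbRadon Z => ∫ x, k.1 x ∂μ.1) inferInstance) (d : TK Z)
    · exact le_iInf fun k => continuous_iff_le_induced.mp (hck k)
  exact Topology.IsInducing.secondCountableTopology
    (f := fun (μ : ProbRadon Z) (d : D) => ∫ x, (d : TK Z).1 x ∂μ.1) ⟨htop⟩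

end SC


section Cont
variable [T2Space Z] [LocallyCompactSpace Z] [BorelSpace Z]

theorem continuous_integral_bc {g : Z → ℝ} (hg : Continuous g) {C : ℝ}
    (hC : ∀ x, |g x| ≤ C) (hC0 : 0 ≤ C) :
    Continuous fun μ : ProbRadon Z => ∫ x, g x ∂μ.1 := by
  rw [continuous_iff_continuousAt]
  intro μ
  refine Metric.tendsto_nhds.2 fun ε hε => ?_
  haveI := μ.2.1
  set δ := min (ε / (3 * C + 2)) (1/2) with hδdef
  have hδpos : 0 < δ := lt_min (by positivity) (by norm_num)
  have hδhalf : δ ≤ 1/2 := min_le_right _ _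
  have hδε : (3 * C + 2) * δ ≤ ε := by
    calc (3 * C + 2) * δ ≤ (3 * C + 2) * (ε / (3 * C + 2)) :=
          mul_le_mul_of_nonneg_left (min_le_left _ _) (by positivity)
      _ = ε := by field_simp
  have h1lt : ENNReal.ofReal (1 - δ) < μ.1 Set.univ := by
    rw [measure_univ]
    exact ENNReal.ofReal_lt_one.2 (by linarith)
  obtain ⟨K, -, hKc, hK⟩ := μ.2.2.innerRegular isOpen_univ _ h1lt
  obtain ⟨χ, hχ1, -, hχc, hχi⟩ := exists_continuous_one_zero_of_isCompact hKc
    isClosed_empty (Set.disjoint_empty _)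
  have hχint : ∀ ν : ProbRadon Z, Integrable (⇑χ) ν.1 := fun ν => by
    haveI := ν.2.1; exact χ.continuous.integrable_of_hasCompactSupport hχc
  have hgχc : Continuous fun x => g x * χ x := hg.mul χ.continuous
  have hgχs : HasCompactSupport fun x => g x * χ x := hχc.mul_left
  have hgχint : ∀ ν : ProbRadon Z, Integrable (fun x => g x * χ x) ν.1 := fun ν => by
    haveI := ν.2.1; exact hgχc.integrable_of_hasCompactSupport hgχs
  have hgint : ∀ ν : ProbRadon Z, Integrable g ν.1 := fun ν =>
    integrable_of_bdd ν hg.aestronglyMeasurable hC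
  have hχle1 : ∀ ν : ProbRadon Z, ∫ x, χ x ∂ν.1 ≤ 1 := fun ν => by
    haveI := ν.2.1
    calc ∫ x, χ x ∂ν.1 ≤ ∫ _x, (1:ℝ) ∂ν.1 :=
          integral_mono (hχint ν) (integrable_const 1) fun x => (hχi x).2
      _ = 1 := by simp [measure_univ]
  have hχμ : 1 - δ ≤ ∫ x, χ x ∂μ.1 := by
    have hKfin : μ.1 K ≠ ⊤ := measure_ne_top _ _
    have hlt : 1 - δ < (μ.1 K).toReal := by
      rw [← ENNReal.ofReal_lt_iff_lt_toReal (by linarith) hKfin]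
      exact hK
    have hind : (μ.1 K).toReal ≤ ∫ x, χ x ∂μ.1 := by
      have he : ∫ x, K.indicator (fun _ => (1:ℝ)) x ∂μ.1 = (μ.1 K).toReal := by
        rw [integral_indicator_const (1:ℝ) hKc.measurableSet]; simp [Measure.real]
      rw [← he]
      refine integral_mono ((integrable_const (1:ℝ)).indicator hKc.measurableSet)
        (hχint μ) fun x => ?_
      by_cases hx : x ∈ K
      · simp only [Set.indicator_of_mem hx]
        exact (hχ1 hx).symm.le
      · simp [Set.indicator_of_notMem hx, (hχi x).1]
    linarith
  have htail : ∀ ν : ProbRadon Z,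
      |(∫ x, g x ∂ν.1) - ∫ x, g x * χ x ∂ν.1| ≤ C * (1 - ∫ x, χ x ∂ν.1) := by
    intro ν
    haveI := ν.2.1
    rw [← integral_sub (hgint ν) (hgχint ν)]
    have hb : ∀ x, |g x - g x * χ x| ≤ C * (1 - χ x) := by
      intro x
      have h1 : g x - g x * χ x = g x * (1 - χ x) := by ring
      rw [h1, abs_mul, abs_of_nonneg (by linarith [(hχi x).2] : (0:ℝ) ≤ 1 - χ x)]
      exact mul_le_mul_of_nonneg_right (hC x) (by linarith [(hχi x).2])
    have hint2 : Integrable (fun x => C * (1 - χ x)) ν.1 :=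
      ((integrable_const (1:ℝ)).sub (hχint ν)).const_mul C
    have habs : |∫ x, (g x - g x * χ x) ∂ν.1| ≤ ∫ x, |g x - g x * χ x| ∂ν.1 := by
      simpa [Real.norm_eq_abs] using
        norm_integral_le_integral_norm (μ := ν.1) (f := fun x => g x - g x * χ x)
    have hmono : ∫ x, |g x - g x * χ x| ∂ν.1 ≤ ∫ x, C * (1 - χ x) ∂ν.1 :=
      integral_mono ((hgint ν).sub (hgχint ν)).abs hint2 hb
    have hval : ∫ x, C * (1 - χ x) ∂ν.1 = C * (1 - ∫ x, χ x ∂ν.1) := by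
      rw [integral_const_mul, integral_sub (integrable_const 1) (hχint ν)]
      simp [measure_univ]
    linarith
  have hA : ∀ᶠ ν in 𝓝 μ, dist (∫ x, g x * χ x ∂ν.1) (∫ x, g x * χ x ∂μ.1) < δ :=
    Metric.tendsto_nhds.1 ((ev_cont ⟨fun x => g x * χ x, hgχc, hgχs⟩).tendsto μ) δ hδpos
  have hB : ∀ᶠ ν in 𝓝 μ, dist (∫ x, χ x ∂ν.1) (∫ x, χ x ∂μ.1) < δ :=
    Metric.tendsto_nhds.1 ((ev_cont ⟨⇑χ, χ.continuous, hχc⟩).tendsto μ) δ hδpos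
  filter_upwards [hA, hB] with ν hν1 hν2
  rw [Real.dist_eq] at hν1 hν2 ⊢
  have e1 := htail ν
  have e2 := htail μ
  have e3 : 1 - ∫ x, χ x ∂μ.1 ≤ δ := by linarith
  have e4 : 1 - ∫ x, χ x ∂ν.1 ≤ 2 * δ := by
    have := abs_lt.1 hν2
    linarith [this.1, this.2]
  have hCν : C * (1 - ∫ x, χ x ∂ν.1) ≤ C * (2 * δ) := mul_le_mul_of_nonneg_left e4 hC0
  have hCμ : C * (1 - ∫ x, χ x ∂μ.1) ≤ C * δ := mul_le_mul_of_nonneg_left e3 hC0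
  have t1 := abs_sub_le (∫ x, g x ∂ν.1) (∫ x, g x * χ x ∂ν.1) (∫ x, g x ∂μ.1)
  have t2 := abs_sub_le (∫ x, g x * χ x ∂ν.1) (∫ x, g x * χ x ∂μ.1) (∫ x, g x ∂μ.1)
  have e2' : |(∫ x, g x * χ x ∂μ.1) - ∫ x, g x ∂μ.1| ≤ C * (1 - ∫ x, χ x ∂μ.1) := by
    rw [abs_sub_comm]; exact e2
  nlinarith [hδpos, hδε]

end Cont

end PRAux

open PRAux

/-- Let `X` and `Y` be second-countable locally compact Hausdorff
spaces and `f : X → Y` Borel measurable.  Then the pushforward is a well-defined map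
`f_# : P(X) → P(Y)` (each `f_# μ` is a probability Radon measure), which is Borel
measurable; if moreover `f` is continuous, then `f_#` is continuous. -/
theorem pushforward_probRadon_measurable
    (X Y : Type*) [TopologicalSpace X] [LocallyCompactSpace X] [T2Space X]
    [SecondCountableTopology X] [MeasurableSpace X] [BorelSpace X]
    [TopologicalSpace Y] [LocallyCompactSpace Y] [T2Space Y]
    [SecondCountableTopology Y] [MeasurableSpace Y] [BorelSpace Y]
    (f : X → Y) (hf : Measurable f) :
    ∃ F : ProbRadon X → ProbRadon Y,
      (∀ μ : ProbRadon X, (F μ).1 = μ.1.map f) ∧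
      Measurable F ∧
      (Continuous f → Continuous F) := by
  classical
  have hprop : ∀ μ : ProbRadon X,
      IsProbabilityMeasure (μ.1.map f) ∧ (μ.1.map f).Regular := by
    intro μ
    haveI := μ.2.1
    haveI : IsProbabilityMeasure (μ.1.map f) := Measure.isProbabilityMeasure_map hf.aemeasurable
    exact ⟨inferInstance, inferInstance⟩
  set F : ProbRadon X → ProbRadon Y := fun μ => ⟨μ.1.map f, hprop μ⟩ with hFdef
  have hFev : ∀ k : TK Y, Measurable fun μ : ProbRadon X => ∫ y, k.1 y ∂(F μ).1 := by
    intro k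
    obtain ⟨C, hCk⟩ := k.2.2.exists_bound_of_continuous k.2.1
    have heq : (fun μ : ProbRadon X => ∫ y, k.1 y ∂(F μ).1)
        = fun μ => ∫ x, k.1 (f x) ∂μ.1 :=
      funext fun μ => integral_map hf.aemeasurable k.2.1.aestronglyMeasurable
    rw [heq]
    exact measurable_integral_bdd (k.2.1.measurable.comp hf)
      (C := C) fun x => by simpa [Real.norm_eq_abs] using hCk (f x)
  refine ⟨F, fun μ => rfl, ?_, ?_⟩
  · -- measurability
    haveI := PRAux.secondCountable (Z := Y)
    refine measurable_generateFrom ?_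
    intro U hU
    replace hU : IsOpen U := hU
    have key : ∀ μ ∈ U, ∃ V : Set (ProbRadon Y),
        (IsOpen V ∧ V ⊆ U ∧ MeasurableSet (F ⁻¹' V)) ∧ μ ∈ V := by
      intro μ hμ
      have hUn : U ∈ @nhds _ (⨅ k : TK Y, TopologicalSpace.induced
          (fun ν : ProbRadon Y => ∫ x, k.1 x ∂ν.1) inferInstance) μ :=
        hU.mem_nhds hμ
      rw [nhds_iInf, Filter.mem_iInf] at hUn
      obtain ⟨I, hIfin, V, hV, hUeq⟩ := hUn
      have hO : ∀ i : I, ∃ O : Set ℝ, IsOpen O ∧ (∫ x, (i : TK Y).1 x ∂μ.1) ∈ O ∧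
          (fun ν : ProbRadon Y => ∫ x, (i : TK Y).1 x ∂ν.1) ⁻¹' O ⊆ V i := by
        intro i
        have hVi := hV i
        rw [nhds_induced, Filter.mem_comap] at hVi
        obtain ⟨W, hW, hWV⟩ := hVi
        obtain ⟨O, hOW, hOo, hOmem⟩ := mem_nhds_iff.1 hW
        exact ⟨O, hOo, hOmem, (Set.preimage_mono hOW).trans hWV⟩
      choose O hOopen hOmem hOsub using hO
      haveI := hIfin.to_subtype
      refine ⟨⋂ i : I, (fun ν : ProbRadon Y => ∫ x, (i : TK Y).1 x ∂ν.1) ⁻¹' O i,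
        ⟨?_, ?_, ?_⟩, ?_⟩
      · exact isOpen_iInter_of_finite fun i => (hOopen i).preimage (ev_cont (i : TK Y))
      · rw [hUeq]; exact Set.iInter_mono fun i => hOsub i
      · rw [Set.preimage_iInter]
        exact MeasurableSet.iInter fun i => hFev (i : TK Y) (hOopen i).measurableSet
      · exact Set.mem_iInter.2 fun i => hOmem i
    obtain ⟨T, hTc, hTS, hTU⟩ := TopologicalSpace.isOpen_sUnion_countable
      {V : Set (ProbRadon Y) | IsOpen V ∧ V ⊆ U ∧ MeasurableSet (F ⁻¹' V)}
      (fun V hV => hV.1)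
    have hU2 : U = ⋃₀ T := by
      rw [hTU]
      apply Set.Subset.antisymm
      · intro μ hμ
        obtain ⟨V, hVS, hμV⟩ := key μ hμ
        exact ⟨V, hVS, hμV⟩
      · rintro μ ⟨V, hVS, hμV⟩
        exact hVS.2.1 hμV
    rw [hU2, Set.preimage_sUnion]
    exact MeasurableSet.biUnion hTc fun V hV => (hTS hV).2.2
  · -- continuity
    intro hfc
    apply continuous_iInf_rng.2
    intro k
    apply continuous_induced_rng.2
    obtain ⟨C, hCk⟩ := k.2.2.exists_bound_of_continuous k.2.1
    have heq : ((fun ν : ProbRadon Y => ∫ y, k.1 y ∂ν.1) ∘ F)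
        = fun μ : ProbRadon X => ∫ x, k.1 (f x) ∂μ.1 :=
      funext fun μ => integral_map hf.aemeasurable k.2.1.aestronglyMeasurable
    rw [heq]
    refine continuous_integral_bc (k.2.1.comp hfc) (C := |C|) (fun x => ?_) (abs_nonneg C)
    calc |k.1 (f x)| ≤ C := by simpa [Real.norm_eq_abs] using hCk (f x)
      _ ≤ |C| := le_abs_self C

end
end

section
/- Let X and Y be second-countable locally compact Hausdorff spaces. Then the map P(X) × P(Y) → P(X×Y), (μ,ν) ↦ μ × ν (the product measure), is well defined (μ × ν is a probability Radon measure over X×Y) and continuous with respect to the weak topologies. -/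
open MeasureTheory Topology

noncomputable section

section Approx

variable {X Y : Type*} [TopologicalSpace X] [LocallyCompactSpace X] [T2Space X]
    [TopologicalSpace Y] [LocallyCompactSpace Y] [T2Space Y]

/-- Continuous functions separate points on a locally compact Hausdorff space. -/
lemma sep_pts {a b : X} (h : a ≠ b) : ∃ f : C(X, ℝ), f a ≠ f b := by
  obtain ⟨f, hf1, hf0, -, -⟩ := exists_continuous_one_zero_of_isCompact
    (isCompact_singleton (x := a)) (isClosed_singleton (x := b))
    (Set.disjoint_singleton.mpr h)
  exact ⟨f, by simp [hf1 rfl, hf0 rfl]⟩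

lemma exists_sum_prod_approx (k : X × Y → ℝ) (hk : Continuous k)
    (hks : HasCompactSupport k) {ε : ℝ} (hε : 0 < ε) :
    ∃ (n : ℕ) (f : Fin n → X → ℝ) (g : Fin n → Y → ℝ),
      (∀ i, Continuous (f i) ∧ HasCompactSupport (f i)) ∧
      (∀ i, Continuous (g i) ∧ HasCompactSupport (g i)) ∧
      ∀ x y, |k (x, y) - ∑ i, f i x * g i y| ≤ ε := by
  -- cutoff functions
  obtain ⟨φ, hφ1, -, hφc, hφ01⟩ := exists_continuous_one_zero_of_isCompact
    (hks.image continuous_fst) isClosed_empty (Set.disjoint_empty _)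
  obtain ⟨ψ, hψ1, -, hψc, hψ01⟩ := exists_continuous_one_zero_of_isCompact
    (hks.image continuous_snd) isClosed_empty (Set.disjoint_empty _)
  set S : Set X := tsupport φ with hSdef
  set T : Set Y := tsupport ψ with hTdef
  set C : Set (X × Y) := S ×ˢ T with hCdef
  haveI : CompactSpace ↥C := isCompact_iff_compactSpace.mp (hφc.prod hψc)
  -- the set of products
  set L : Set C(↥C, ℝ) :=
    {h | ∃ (f : C(X, ℝ)) (g : C(Y, ℝ)), ∀ p : ↥C, h p = f (p : X × Y).1 * g (p : X × Y).2}
    with hLdef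
  have hLmul : ∀ h₁ ∈ L, ∀ h₂ ∈ L, h₁ * h₂ ∈ L := by
    rintro h₁ ⟨f₁, g₁, hfg₁⟩ h₂ ⟨f₂, g₂, hfg₂⟩
    exact ⟨f₁ * f₂, g₁ * g₂, fun p => by
      simp only [ContinuousMap.mul_apply, hfg₁ p, hfg₂ p]; ring⟩
  have hLone : (1 : C(↥C, ℝ)) ∈ L := ⟨1, 1, fun p => by simp⟩
  set M : Submonoid C(↥C, ℝ) :=
    { carrier := L, mul_mem' := fun ha hb => hLmul _ ha _ hb, one_mem' := hLone } with hMdef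
  -- L separates points
  have hsep : (Algebra.adjoin ℝ L).SeparatesPoints := by
    intro p q hpq
    have hne : (p : X × Y) ≠ (q : X × Y) := Subtype.coe_injective.ne hpq
    have : (p : X × Y).1 ≠ (q : X × Y).1 ∨ (p : X × Y).2 ≠ (q : X × Y).2 := by
      by_contra hc
      push_neg at hc
      exact hne (Prod.ext hc.1 hc.2)
    rcases this with h1 | h2
    · obtain ⟨f, hf⟩ := sep_pts h1
      refine ⟨_, ⟨⟨fun r => f (r : X × Y).1 * 1,
        (f.continuous.comp (continuous_fst.comp continuous_subtype_val)).mul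
          continuous_const⟩, Algebra.subset_adjoin ⟨f, 1, fun r => by simp⟩, rfl⟩, ?_⟩
      simpa using hf
    · obtain ⟨g, hg⟩ := sep_pts h2
      refine ⟨_, ⟨⟨fun r => (1 : ℝ) * g (r : X × Y).2,
        continuous_const.mul (g.continuous.comp
          (continuous_snd.comp continuous_subtype_val))⟩,
        Algebra.subset_adjoin ⟨1, g, fun r => by simp⟩, rfl⟩, ?_⟩
      simpa using hg
  -- Stone-Weierstrass
  obtain ⟨⟨h, hmem⟩, hhb⟩ :=
    ContinuousMap.exists_mem_subalgebra_near_continuous_of_separatesPoints (Algebra.adjoin ℝ L) hsep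
    (fun p : ↥C => k p) (hk.comp continuous_subtype_val) ε hε
  -- h is in the span of L
  have hspan : h ∈ Submodule.span ℝ L := by
    have h1 : h ∈ Subalgebra.toSubmodule (Algebra.adjoin ℝ L) := hmem
    rw [Algebra.adjoin_eq_span] at h1
    have h2 : (Submonoid.closure L : Set C(↥C, ℝ)) ⊆ L :=
      Submonoid.closure_le (S := M) |>.mpr le_rfl
    exact Submodule.span_mono h2 h1
  obtain ⟨n, co, sel, hsum⟩ := Submodule.mem_span_set'.mp hspan
  have hsel : ∀ i, ∃ (f : C(X, ℝ)) (g : C(Y, ℝ)),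
      ∀ p : ↥C, (sel i : C(↥C, ℝ)) p = f (p : X × Y).1 * g (p : X × Y).2 := fun i => (sel i).2
  choose f0 g0 hfg using hsel
  refine ⟨n, fun i x => co i * (φ x * f0 i x), fun i y => ψ y * g0 i y, ?_, ?_, ?_⟩
  · intro i
    refine ⟨continuous_const.mul (φ.continuous.mul (f0 i).continuous), ?_⟩
    refine HasCompactSupport.intro hφc fun x hx => ?_
    show co i * (φ x * f0 i x) = 0
    rw [image_eq_zero_of_notMem_tsupport hx]; ring
  · intro i
    refine ⟨ψ.continuous.mul ((g0 i).continuous), ?_⟩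
    refine HasCompactSupport.intro hψc fun y hy => ?_
    show ψ y * g0 i y = 0
    rw [image_eq_zero_of_notMem_tsupport hy]; ring
  · intro x y
    -- k (x, y) = φ x * ψ y * k (x, y)
    have hkfac : k (x, y) = φ x * ψ y * k (x, y) := by
      by_cases h0 : k (x, y) = 0
      · rw [h0]; ring
      · have hmem : (x, y) ∈ tsupport k := subset_closure (by exact h0)
        rw [hφ1 ⟨(x, y), hmem, rfl⟩, hψ1 ⟨(x, y), hmem, rfl⟩]; simp
    have hfac : k (x, y) - ∑ i, (co i * (φ x * f0 i x)) * (ψ y * g0 i y)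
        = φ x * ψ y * (k (x, y) - ∑ i, co i * (f0 i x * g0 i y)) := by
      rw [mul_sub, Finset.mul_sum, ← hkfac]
      congr 1
      exact Finset.sum_congr rfl fun i _ => by ring
    rw [hfac]
    by_cases hxy : (x, y) ∈ C
    · have hp : ∑ i, co i * (f0 i x * g0 i y) = h ⟨(x, y), hxy⟩ := by
        rw [← hsum]
        have : ((∑ i, co i • (sel i : C(↥C, ℝ))) : C(↥C, ℝ)) ⟨(x, y), hxy⟩
            = ∑ i, co i * (sel i : C(↥C, ℝ)) ⟨(x, y), hxy⟩ := by
          simp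
        rw [this]
        exact Finset.sum_congr rfl fun i _ => by rw [hfg i ⟨(x, y), hxy⟩]
      rw [hp]
      have h1 : |k (x, y) - h ⟨(x, y), hxy⟩| ≤ ε := by
        have := hhb ⟨(x, y), hxy⟩
        rw [Real.norm_eq_abs] at this
        rw [abs_sub_comm]
        exact this.le
      have h2 : |φ x * ψ y| ≤ 1 := by
        rw [abs_mul]
        have := (hφ01 x).1; have := (hφ01 x).2; have := (hψ01 y).1; have := (hψ01 y).2
        calc |φ x| * |ψ y| ≤ 1 * 1 := by
              apply mul_le_mul
              · rw [abs_le]; constructor <;> linarith [(hφ01 x).1, (hφ01 x).2]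
              · rw [abs_le]; constructor <;> linarith [(hψ01 y).1, (hψ01 y).2]
              · exact abs_nonneg _
              · norm_num
          _ = 1 := by norm_num
      calc |φ x * ψ y * (k (x, y) - h ⟨(x, y), hxy⟩)|
          = |φ x * ψ y| * |k (x, y) - h ⟨(x, y), hxy⟩| := abs_mul _ _
        _ ≤ 1 * ε := mul_le_mul h2 h1 (abs_nonneg _) one_pos.le
        _ = ε := one_mul ε
    · have hz : φ x * ψ y = 0 := by
        simp only [hCdef, Set.mem_prod, not_and_or] at hxy
        rcases hxy with h | h
        · rw [image_eq_zero_of_notMem_tsupport h, zero_mul]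
        · rw [image_eq_zero_of_notMem_tsupport h, mul_zero]
      rw [hz]
      simpa using hε.le

end Approx

lemma contInt {X : Type*} [TopologicalSpace X] [MeasurableSpace X]
    (h : X → ℝ) (hc : Continuous h) (hs : HasCompactSupport h) :
    Continuous fun μ : ProbRadon X => ∫ x, h x ∂μ.1 :=
  continuous_iInf_dom (i := ⟨h, hc, hs⟩) continuous_induced_dom


/-- Let `X` and `Y` be second-countable locally compact Hausdorff
spaces.  Then the map `P(X) × P(Y) → P(X × Y)`, `(μ, ν) ↦ μ × ν` (product measure), is
well defined (`μ × ν` is a probability Radon measure over `X × Y`) and continuous with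
respect to the weak topologies. -/
theorem product_probRadon_continuous
    (X Y : Type*) [TopologicalSpace X] [LocallyCompactSpace X] [T2Space X]
    [SecondCountableTopology X] [MeasurableSpace X] [BorelSpace X]
    [TopologicalSpace Y] [LocallyCompactSpace Y] [T2Space Y]
    [SecondCountableTopology Y] [MeasurableSpace Y] [BorelSpace Y] :
    ∃ F : ProbRadon X × ProbRadon Y → ProbRadon (X × Y),
      (∀ (μ : ProbRadon X) (ν : ProbRadon Y), (F (μ, ν)).1 = μ.1.prod ν.1) ∧
      Continuous F := by
  have hFdef : ∀ p : ProbRadon X × ProbRadon Y,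
      IsProbabilityMeasure (p.1.1.prod p.2.1) ∧ (p.1.1.prod p.2.1).Regular := by
    intro p
    haveI := p.1.2.1; haveI := p.2.2.1
    refine ⟨inferInstance, ?_⟩
    haveI : IsLocallyFiniteMeasure (p.1.1.prod p.2.1) := inferInstance
    infer_instance
  refine ⟨fun p => ⟨p.1.1.prod p.2.1, hFdef p⟩, fun μ ν => rfl, ?_⟩
  refine continuous_iInf_rng.mpr fun k => continuous_induced_rng.mpr ?_
  show Continuous fun p : ProbRadon X × ProbRadon Y => ∫ z, k.1 z ∂(p.1.1.prod p.2.1)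
  -- approximants
  have H : ∀ m : ℕ, ∃ (n : ℕ) (f : Fin n → X → ℝ) (g : Fin n → Y → ℝ),
      (∀ i, Continuous (f i) ∧ HasCompactSupport (f i)) ∧
      (∀ i, Continuous (g i) ∧ HasCompactSupport (g i)) ∧
      ∀ x y, |k.1 (x, y) - ∑ i, f i x * g i y| ≤ 1 / (m + 1) :=
    fun m => exists_sum_prod_approx k.1 k.2.1 k.2.2 (by positivity)
  choose N f g hf hg hb using H
  set G : ℕ → ProbRadon X × ProbRadon Y → ℝ :=
    fun m p => ∑ i : Fin (N m), (∫ x, f m i x ∂p.1.1) * (∫ y, g m i y ∂p.2.1) with hGdef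
  have hGcont : ∀ m, Continuous (G m) := by
    intro m
    refine continuous_finset_sum _ fun i _ => Continuous.mul ?_ ?_
    · exact (contInt (f m i) (hf m i).1 (hf m i).2).comp continuous_fst
    · exact (contInt (g m i) (hg m i).1 (hg m i).2).comp continuous_snd
  have key : ∀ m p, |(∫ z, k.1 z ∂(p.1.1.prod p.2.1)) - G m p| ≤ 1 / (m + 1) := by
    intro m p
    haveI := p.1.2.1; haveI := p.2.2.1
    haveI : IsProbabilityMeasure (p.1.1.prod p.2.1) := inferInstance
    have int_k : Integrable k.1 (p.1.1.prod p.2.1) :=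
      k.2.1.integrable_of_hasCompactSupport k.2.2
    have int_i : ∀ i, Integrable (fun z : X × Y => f m i z.1 * g m i z.2)
        (p.1.1.prod p.2.1) := by
      intro i
      refine Continuous.integrable_of_hasCompactSupport
        (((hf m i).1.comp continuous_fst).mul ((hg m i).1.comp continuous_snd)) ?_
      refine HasCompactSupport.intro ((hf m i).2.prod (hg m i).2) fun z hz => ?_
      simp only [Set.mem_prod, not_and_or] at hz
      rcases hz with h | h
      · rw [image_eq_zero_of_notMem_tsupport h, zero_mul]
      · rw [image_eq_zero_of_notMem_tsupport h, mul_zero]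
    have sum_eq : (∫ z : X × Y, (∑ i : Fin (N m), f m i z.1 * g m i z.2)
        ∂(p.1.1.prod p.2.1)) = G m p := by
      rw [integral_finset_sum _ fun i _ => int_i i]
      exact Finset.sum_congr rfl fun i _ => integral_prod_mul (f m i) (g m i)
    have hdiff : (∫ z, k.1 z ∂(p.1.1.prod p.2.1)) - G m p
        = ∫ z : X × Y, (k.1 z - ∑ i : Fin (N m), f m i z.1 * g m i z.2)
          ∂(p.1.1.prod p.2.1) := by
      rw [integral_sub int_k (integrable_finset_sum _ fun i _ => int_i i), sum_eq]
    rw [hdiff]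
    calc ‖∫ z : X × Y, (k.1 z - ∑ i : Fin (N m), f m i z.1 * g m i z.2)
          ∂(p.1.1.prod p.2.1)‖
        ≤ (1 / (m + 1)) * ((p.1.1.prod p.2.1) Set.univ).toReal := by
          refine norm_integral_le_of_norm_le_const (ae_of_all _ fun z => ?_)
          rw [Real.norm_eq_abs]
          simpa using hb m z.1 z.2
      _ = 1 / (m + 1) := by simp
  -- uniform convergence
  have hunif : TendstoUniformly G
      (fun p : ProbRadon X × ProbRadon Y => ∫ z, k.1 z ∂(p.1.1.prod p.2.1))
      Filter.atTop := by
    rw [Metric.tendstoUniformly_iff]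
    intro ε hε
    obtain ⟨M, hM⟩ := exists_nat_one_div_lt hε
    filter_upwards [Filter.eventually_ge_atTop M] with m hm p
    rw [Real.dist_eq]
    calc |(∫ z, k.1 z ∂(p.1.1.prod p.2.1)) - G m p| ≤ 1 / (m + 1) := key m p
      _ ≤ 1 / (M + 1) := by
          apply one_div_le_one_div_of_le (by positivity)
          exact_mod_cast Nat.succ_le_succ hm
      _ < ε := hM
  exact hunif.continuous (Filter.Eventually.of_forall hGcont).frequently

end
end
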